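/- Let o : ℝ³ × Ω → ℝ be measurable in ω for each p, and for Δ ∈ [0,1] define the risk contour C^Δ = {p : Prob(o(p,ω) ≤ 0) ≤ Δ}. Define the moment-based set Ĉ^Δ = {p : E[o(p,ω)²] > 0 ∧ E[o(p,ω)] ≥ 0 ∧ (E[o(p,ω)²] − E[o(p,ω)]²)/E[o(p,ω)²] ≤ Δ}. Then Ĉ^Δ ⊆ C^Δ. -/

import Mathlib

/-!
Let `B = {o > 0}`. Since `E[o] ≥ 0`, Cauchy–Schwarz applied to `o⁺ = o⁺ · 1_B` gives
`E[o]² ≤ E[o⁺]² ≤ E[o²] · P(B)`, and `P(o ≤ 0) = 1 - P(B)` is then at most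
`(E[o²] - E[o]²) / E[o²]`.
-/

open MeasureTheory

section

variable {α : Type*} [MeasurableSpace α] {μ : Measure α}

theorem sq_integral_mul_le_of_nonneg {f g : α → ℝ} (hf : 0 ≤ᵐ[μ] f) (hg : 0 ≤ᵐ[μ] g)
    (hf₂ : MemLp f 2 μ) (hg₂ : MemLp g 2 μ) :
    (∫ a, f a * g a ∂μ) ^ 2 ≤ (∫ a, f a ^ 2 ∂μ) * ∫ a, g a ^ 2 ∂μ := by
  have holder := integral_mul_le_Lp_mul_Lq_of_nonneg Real.HolderConjugate.two_two hf hg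
    (by simpa using hf₂) (by simpa using hg₂)
  simp only [Real.rpow_two, ← Real.sqrt_eq_rpow] at holder
  have hfg : 0 ≤ ∫ a, f a * g a ∂μ :=
    integral_nonneg_of_ae (by filter_upwards [hf, hg] with a ha hb using mul_nonneg ha hb)
  calc (∫ a, f a * g a ∂μ) ^ 2
      ≤ (√(∫ a, f a ^ 2 ∂μ) * √(∫ a, g a ^ 2 ∂μ)) ^ 2 := pow_le_pow_left₀ hfg holder 2
    _ = (∫ a, f a ^ 2 ∂μ) * ∫ a, g a ^ 2 ∂μ := by
      rw [mul_pow, Real.sq_sqrt (integral_nonneg fun _ => sq_nonneg _),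
        Real.sq_sqrt (integral_nonneg fun _ => sq_nonneg _)]

theorem sq_integral_le_integral_sq_mul_measureReal_pos [IsFiniteMeasure μ] {X : α → ℝ}
    (hXm : Measurable X) (hX : MemLp X 2 μ) (hmean : 0 ≤ ∫ a, X a ∂μ) :
    (∫ a, X a ∂μ) ^ 2 ≤ (∫ a, X a ^ 2 ∂μ) * μ.real {a | 0 < X a} := by
  set B := {a | 0 < X a}
  have hB : MeasurableSet B := measurableSet_lt measurable_const hXm
  set f : α → ℝ := fun a => max (X a) 0
  set g : α → ℝ := B.indicator 1
  have hf₂ : MemLp f 2 μ := hX.sup (memLp_const 0)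
  have hg₂ : MemLp g 2 μ := (memLp_const 1).indicator hB
  have hf_eq : ∀ a, f a * g a = f a := by
    intro a
    by_cases ha : 0 < X a
    · simp [g, Set.indicator_of_mem (show a ∈ B from ha)]
    · simp [f, max_eq_right (not_lt.mp ha)]
  have hg_sq : ∀ a, g a ^ 2 = g a := by
    intro a
    by_cases ha : a ∈ B <;> simp [g, ha]
  calc (∫ a, X a ∂μ) ^ 2
      ≤ (∫ a, f a ∂μ) ^ 2 :=
        pow_le_pow_left₀ hmean
          (integral_mono (hX.integrable one_le_two) (hf₂.integrable one_le_two)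
            fun a => le_max_left _ _) 2
    _ = (∫ a, f a * g a ∂μ) ^ 2 := by simp only [hf_eq]
    _ ≤ (∫ a, f a ^ 2 ∂μ) * ∫ a, g a ^ 2 ∂μ :=
        sq_integral_mul_le_of_nonneg (.of_forall fun _ => le_max_right _ _)
          (.of_forall (Set.indicator_nonneg fun _ _ => zero_le_one)) hf₂ hg₂
    _ ≤ (∫ a, X a ^ 2 ∂μ) * μ.real B := by
        rw [funext hg_sq, integral_indicator_one hB]
        refine mul_le_mul_of_nonneg_right (integral_mono hf₂.integrable_sq hX.integrable_sq
          fun a => ?_) measureReal_nonneg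
        rw [← sq_abs (X a)]
        exact pow_le_pow_left₀ (le_max_right _ _) (max_le (le_abs_self _) (abs_nonneg _)) 2

theorem measureReal_nonpos_le_of_integral_nonneg [IsProbabilityMeasure μ] {X : α → ℝ}
    (hXm : Measurable X) (hX : MemLp X 2 μ) (hsq : 0 < ∫ a, X a ^ 2 ∂μ)
    (hmean : 0 ≤ ∫ a, X a ∂μ) :
    μ.real {a | X a ≤ 0} ≤ ((∫ a, X a ^ 2 ∂μ) - (∫ a, X a ∂μ) ^ 2) / ∫ a, X a ^ 2 ∂μ := by
  have hcompl : {a | X a ≤ 0} = {a | 0 < X a}ᶜ := by ext; simp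
  rw [le_div_iff₀ hsq, hcompl,
    probReal_compl_eq_one_sub (measurableSet_lt measurable_const hXm)]
  linarith [sq_integral_le_integral_sq_mul_measureReal_pos hXm hX hmean]

end

theorem moment_set_subset_risk_contour_general
    {Ω : Type*} [MeasurableSpace Ω] (P : Measure Ω) [IsProbabilityMeasure P]
    (o : (Fin 3 → ℝ) → Ω → ℝ)
    (hmeas : ∀ p, Measurable (o p)) (hL2 : ∀ p, MemLp (o p) 2 P)
    (Δ : ℝ) :
    {p : Fin 3 → ℝ |
        0 < ∫ ω, (o p ω) ^ 2 ∂P ∧ 0 ≤ ∫ ω, o p ω ∂P ∧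
        ((∫ ω, (o p ω) ^ 2 ∂P) - (∫ ω, o p ω ∂P) ^ 2) / (∫ ω, (o p ω) ^ 2 ∂P) ≤ Δ}
      ⊆ {p : Fin 3 → ℝ | (P {ω | o p ω ≤ 0}).toReal ≤ Δ} := by
  rintro p ⟨hsq, hmean, hratio⟩
  exact (measureReal_nonpos_le_of_integral_nonneg (hmeas p) (hL2 p) hsq hmean).trans hratio

/-- The moment-based set `Ĉ^Δ` is an inner approximation of the risk contour `C^Δ`. -/
theorem moment_set_subset_risk_contour
    {Ω : Type*} [MeasurableSpace Ω] (P : Measure Ω) [IsProbabilityMeasure P]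
    (o : (Fin 3 → ℝ) → Ω → ℝ)
    (hmeas : ∀ p, Measurable (o p)) (hL2 : ∀ p, MemLp (o p) 2 P)
    (Δ : ℝ) (hΔ0 : 0 ≤ Δ) (hΔ1 : Δ ≤ 1) :
    {p : Fin 3 → ℝ |
        0 < ∫ ω, (o p ω) ^ 2 ∂P ∧ 0 ≤ ∫ ω, o p ω ∂P ∧
        ((∫ ω, (o p ω) ^ 2 ∂P) - (∫ ω, o p ω ∂P) ^ 2) / (∫ ω, (o p ω) ^ 2 ∂P) ≤ Δ}
      ⊆ {p : Fin 3 → ℝ | (P {ω | o p ω ≤ 0}).toReal ≤ Δ} :=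
  moment_set_subset_risk_contour_general P o hmeas hL2 Δ
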